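/- arXiv:2410.21244 — 3 statements merged into one kernel-verified Lean document; each statement's English description precedes it below -/
import Mathlib

section
/- Let C be a category in which idempotents split, and let D be a full subcategory closed under retracts such that every pair of parallel morphisms between objects of D admits a weak equalizer lying in D, and such that D is closed under small products. If X admits a weak reflection onto D, then X admits a reflection onto D. -/
open CategoryTheory CategoryTheory.Limits

/-- In a category where idempotents split, if `D` is a full
subcategory closed under retracts, in which every parallel pair of morphisms
between objects of `D` admits a weak equalizer lying in `D`, and `D` is closed
under small products (which exist in `C`), then every object admitting a weak
reflection onto `D` admits a reflection onto `D`. -/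
theorem weak_reflection_to_reflection
    {C : Type u} [Category.{v} C] [HasProducts.{v} C] (D : Set C)
    (hsplit : ∀ (X : C) (e : X ⟶ X), e ≫ e = e →
      ∃ (Y : C) (f : X ⟶ Y) (g : Y ⟶ X), f ≫ g = e ∧ g ≫ f = 𝟙 Y)
    (hretract : ∀ Y Z : C, Z ∈ D →
      ∀ (i : Y ⟶ Z) (p : Z ⟶ Y), i ≫ p = 𝟙 Y → Y ∈ D)
    (hweq : ∀ A ∈ D, ∀ B ∈ D, ∀ (f g : A ⟶ B),
      ∃ E ∈ D, ∃ u : E ⟶ A, u ≫ f = u ≫ g ∧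
        ∀ (W : C) (h : W ⟶ A), h ≫ f = h ≫ g → ∃ k : W ⟶ E, k ≫ u = h)
    (hprod : ∀ {J : Type v} (f : J → C), (∀ j, f j ∈ D) →
      ∀ (c : Fan f), IsLimit c → c.pt ∈ D)
    (X : C)
    (hweakrefl : ∃ D₀ ∈ D, ∃ r : X ⟶ D₀,
      ∀ E ∈ D, ∀ g : X ⟶ E, ∃ h : D₀ ⟶ E, r ≫ h = g) :
    ∃ D₀ ∈ D, ∃ r : X ⟶ D₀,
      ∀ E ∈ D, ∀ g : X ⟶ E, ∃! h : D₀ ⟶ E, r ≫ h = g := by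
  obtain ⟨D₀, hD₀, r, hr⟩ := hweakrefl
  -- the type of endomorphisms of D₀ fixing r
  set J : Type v := {h : D₀ ⟶ D₀ // r ≫ h = r} with hJ
  -- the product of J copies of D₀ lies in D
  have hP : (∏ᶜ fun _ : J => D₀) ∈ D := by
    exact hprod (fun _ : J => D₀) (fun _ => hD₀)
      (limit.cone _) (limit.isLimit _)
  -- two maps into the product
  set f₁ : D₀ ⟶ ∏ᶜ fun _ : J => D₀ := Pi.lift (fun j => j.val) with hf₁
  set f₂ : D₀ ⟶ ∏ᶜ fun _ : J => D₀ := Pi.lift (fun _ => 𝟙 D₀) with hf₂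
  have hreq : r ≫ f₁ = r ≫ f₂ := by
    apply Limits.Pi.hom_ext
    intro j
    simp [hf₁, hf₂, j.prop]
  -- weak equalizer of f₁, f₂
  obtain ⟨E, hE, u, hu, huw⟩ := hweq D₀ hD₀ _ hP f₁ f₂
  -- key: u ≫ j = u for every j : J
  have key : ∀ j : J, u ≫ j.val = u := by
    intro j
    have := congrArg (fun z => z ≫ Pi.π (fun _ : J => D₀) j) hu
    simpa [hf₁, hf₂] using this
  obtain ⟨r', hr'⟩ := huw X r hreq
  obtain ⟨t, ht⟩ := hr E hE r'
  have htu : r ≫ (t ≫ u) = r := by rw [← Category.assoc, ht, hr']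
  have hutu : u ≫ (t ≫ u) = u := key ⟨t ≫ u, htu⟩
  have he : (u ≫ t) ≫ (u ≫ t) = u ≫ t := by
    calc (u ≫ t) ≫ (u ≫ t) = (u ≫ t ≫ u) ≫ t := by simp
    _ = u ≫ t := by rw [hutu]
  obtain ⟨Y, p, i, hpi, hip⟩ := hsplit E (u ≫ t) he
  have hY : Y ∈ D := hretract Y E hE i p hip
  set m : Y ⟶ D₀ := i ≫ u with hm
  set rr : X ⟶ Y := r' ≫ p with hrr
  -- m is split mono with retraction t ≫ p
  have hms : m ≫ (t ≫ p) = 𝟙 Y := by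
    calc m ≫ (t ≫ p) = i ≫ (u ≫ t) ≫ p := by simp [hm]
    _ = i ≫ (p ≫ i) ≫ p := by rw [hpi]
    _ = (i ≫ p) ≫ (i ≫ p) := by simp
    _ = 𝟙 Y := by rw [hip]; simp
  -- rr ≫ m = r
  have hrm : rr ≫ m = r := by
    calc rr ≫ m = r' ≫ (p ≫ i) ≫ u := by simp [hrr, hm]
    _ = r' ≫ (u ≫ t) ≫ u := by rw [hpi]
    _ = (r' ≫ u) ≫ (t ≫ u) := by simp
    _ = r := by rw [hr', htu]
  -- any endomorphism of Y fixing rr is the identity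
  have hfix : ∀ φ : Y ⟶ Y, rr ≫ φ = rr → φ = 𝟙 Y := by
    intro φ hφ
    have hj : r ≫ (t ≫ p ≫ φ ≫ m) = r := by
      calc r ≫ (t ≫ p ≫ φ ≫ m) = ((r ≫ t) ≫ p) ≫ φ ≫ m := by simp
      _ = (rr ≫ φ) ≫ m := by rw [ht, hrr]; simp
      _ = r := by rw [hφ, hrm]
    have h1 : u ≫ (t ≫ p ≫ φ ≫ m) = u := key ⟨_, hj⟩
    have h2 : i ≫ u ≫ (t ≫ p ≫ φ ≫ m) = m := by rw [h1, hm]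
    have h3 : (m ≫ t ≫ p) ≫ (φ ≫ m) = m := by
      simpa [hm, Category.assoc] using h2
    rw [hms, Category.id_comp] at h3
    -- φ ≫ m = m, and m is split mono
    calc φ = φ ≫ m ≫ (t ≫ p) := by rw [hms]; simp
    _ = m ≫ (t ≫ p) := by rw [← Category.assoc, h3]
    _ = 𝟙 Y := hms
  refine ⟨Y, hY, rr, fun E' hE' g => ?_⟩
  obtain ⟨h, hh⟩ := hr E' hE' g
  refine ⟨m ≫ h, show rr ≫ m ≫ h = g by rw [← Category.assoc, hrm, hh], ?_⟩
  -- uniqueness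
  intro h' hh'
  -- show any two solutions coincide
  suffices huniq : ∀ h₁ h₂ : Y ⟶ E', rr ≫ h₁ = g → rr ≫ h₂ = g → h₁ = h₂ by
    exact huniq h' (m ≫ h) hh' (by rw [← Category.assoc, hrm, hh])
  intro h₁ h₂ hg₁ hg₂
  obtain ⟨E'', hE'', v, hv, hvw⟩ := hweq Y hY E' hE' h₁ h₂
  obtain ⟨q, hq⟩ := hvw X rr (by rw [hg₁, hg₂])
  obtain ⟨s, hs⟩ := hr E'' hE'' q
  have hφ : rr ≫ (m ≫ s ≫ v) = rr := by
    calc rr ≫ (m ≫ s ≫ v) = ((rr ≫ m) ≫ s) ≫ v := by simp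
    _ = q ≫ v := by rw [hrm, hs]
    _ = rr := hq
  have hid : (m ≫ s ≫ v) = 𝟙 Y := hfix _ hφ
  calc h₁ = (m ≫ s ≫ v) ≫ h₁ := by rw [hid]; simp
  _ = (m ≫ s) ≫ (v ≫ h₁) := by simp
  _ = (m ≫ s) ≫ (v ≫ h₂) := by rw [hv]
  _ = (m ≫ s ≫ v) ≫ h₂ := by simp
  _ = h₂ := by rw [hid]; simp
end

section
/- In a triangulated category admitting countable products, every idempotent endomorphism splits. -/
/-!
Let `Y` be the homotopy limit of the tower `⋯ ⟶ X ⟶ X` whose maps are all `e`, i.e. the fibre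
of `1 - shift ∘ e` on `∏ₙ X`. Maps into `∏ₙ X` killed by this map are sequences `(aₙ)` with
`aₙ = aₙ₊₁ ≫ e`; since `e` is idempotent these are the constant sequences with values in the
image of `e`. Idempotence also gives `1 - shift ∘ e` an explicit section, so its fibre `Y ⟶ ∏ₙ X`
is a monomorphism, and `Y` represents exactly these constant sequences: it is the image of `e`.
-/

open CategoryTheory CategoryTheory.Limits CategoryTheory.Pretriangulated

namespace CategoryTheory.Tower

variable {C : Type*} [Category C] [Preadditive C] {X : C} (e : X ⟶ X)
  [HasProduct fun _ : ℕ => X]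

noncomputable def oneSubShift : ∏ᶜ (fun _ : ℕ => X) ⟶ ∏ᶜ fun _ : ℕ => X :=
  Pi.lift fun n => Pi.π _ n - Pi.π _ (n + 1) ≫ e

-- The solution of `xₙ - e xₙ₊₁ = yₙ` given by `xₙ = (1 - e) yₙ - e (y₀ + ⋯ + yₙ₋₁)`.
noncomputable def oneSubShiftSection : ∏ᶜ (fun _ : ℕ => X) ⟶ ∏ᶜ fun _ : ℕ => X :=
  Pi.lift fun n => Pi.π _ n ≫ (𝟙 X - e) - ∑ k ∈ Finset.range n, Pi.π _ k ≫ e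

@[simp]
lemma oneSubShift_π (n : ℕ) :
    oneSubShift e ≫ Pi.π _ n = Pi.π _ n - Pi.π _ (n + 1) ≫ e := by
  simp [oneSubShift]

@[simp]
lemma oneSubShiftSection_π (n : ℕ) :
    oneSubShiftSection e ≫ Pi.π _ n =
      Pi.π _ n ≫ (𝟙 X - e) - ∑ k ∈ Finset.range n, Pi.π _ k ≫ e := by
  simp [oneSubShiftSection]

variable {e}

lemma oneSubShiftSection_comp_oneSubShift (he : e ≫ e = e) :
    oneSubShiftSection e ≫ oneSubShift e = 𝟙 _ := by
  ext n
  rw [Category.assoc, oneSubShift_π, Preadditive.comp_sub, ← Category.assoc,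
    oneSubShiftSection_π, oneSubShiftSection_π, Finset.sum_range_succ]
  simp only [Preadditive.comp_sub, Preadditive.sub_comp, Preadditive.add_comp,
    Preadditive.sum_comp, Category.assoc, Category.comp_id, Category.id_comp, he, sub_self]
  abel

lemma lift_comp_oneSubShift (he : e ≫ e = e) :
    Pi.lift (fun _ : ℕ => e) ≫ oneSubShift e = 0 := by
  ext n
  simp [Preadditive.comp_sub, he]

lemma comp_π_eq_of_comp_oneSubShift_eq_zero (he : e ≫ e = e) {W : C}
    {a : W ⟶ ∏ᶜ fun _ : ℕ => X} (ha : a ≫ oneSubShift e = 0) (n : ℕ) :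
    a ≫ Pi.π _ n = a ≫ Pi.π _ 0 ≫ e := by
  have step (n : ℕ) : a ≫ Pi.π _ n = a ≫ Pi.π _ (n + 1) ≫ e := by
    simpa [Preadditive.comp_sub, sub_eq_zero] using congrArg (· ≫ Pi.π _ n) ha
  have fixed (n : ℕ) : a ≫ Pi.π _ n ≫ e = a ≫ Pi.π _ n := by
    rw [← Category.assoc, step n, Category.assoc, Category.assoc, he]
  induction n with
  | zero => exact (fixed 0).symm
  | succ n ih => rw [← fixed (n + 1), ← step n, ih]

end CategoryTheory.Tower

open CategoryTheory.Tower in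
/-- In a triangulated category admitting countable products,
every idempotent endomorphism splits. -/
theorem idempotents_split_in_triangulated_with_countable_products
    {C : Type u} [Category.{v} C] [Preadditive C] [HasZeroObject C]
    [HasShift C ℤ] [∀ n : ℤ, (shiftFunctor C n).Additive] [Pretriangulated C]
    [IsTriangulated C] [HasCountableProducts C]
    (X : C) (e : X ⟶ X) (he : e ≫ e = e) :
    ∃ (Y : C) (f : X ⟶ Y) (g : Y ⟶ X), f ≫ g = e ∧ g ≫ f = 𝟙 Y := by
  obtain ⟨Y, i, δ, hT⟩ := distinguished_cocone_triangle₁ (oneSubShift e)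
  have : IsSplitEpi (oneSubShift e) := ⟨⟨_, oneSubShiftSection_comp_oneSubShift he⟩⟩
  have hδ : δ = 0 := Triangle.mor₃_eq_zero_of_epi₂ _ hT (inferInstanceAs (Epi (oneSubShift e)))
  have : Mono i := Triangle.mono₁ _ hT hδ
  obtain ⟨f, hf⟩ : ∃ f : X ⟶ Y, Pi.lift (fun _ => e) = f ≫ i :=
    Triangle.coyoneda_exact₂ _ hT _ (lift_comp_oneSubShift he)
  refine ⟨Y, f, i ≫ Pi.π _ 0, by simp [← Category.assoc, ← hf], ?_⟩
  rw [← cancel_mono i]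
  ext n
  have hi : i ≫ oneSubShift e = 0 := comp_distTriang_mor_zero₁₂ _ hT
  simp only [Category.assoc, ← reassoc_of% hf, Pi.lift_π, Category.id_comp]
  exact (comp_π_eq_of_comp_oneSubShift_eq_zero he hi n).symm
end

section
/- The full subcategory of 1-connected pointed spaces is not reflective in the pointed homotopy category: there is no map ℓ : ℝP² → X with X 1-connected such that precomposition with ℓ induces a bijection [X, K(ℤ,2)] ≅ [ℝP², K(ℤ,2)]. -/
open CategoryTheory

/-- The full subcategory of `1`-connected pointed spaces is not
reflective in the pointed homotopy category: there is no map
`ℓ : ℝP² ⟶ X` with `X` `1`-connected such that precomposition with `ℓ` induces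
a bijection `[X, K(ℤ,2)] ≅ [ℝP², K(ℤ,2)]`.

We formalize the pointed homotopy category abstractly as a category `Ho` with
an object `KZ2` (a `K(ℤ,2)`) whose hom-sets `[Y, KZ2] ≅ H²(Y; ℤ)` carry an
abelian group structure natural in `Y` (precomposition is additive), an object
`RP2` (the real projective plane) with `[RP2, KZ2] ≅ H²(ℝP²;ℤ) ≅ ℤ/2`, and a
class `OneConn` of `1`-connected objects for which `[X, KZ2] ≅ H²(X;ℤ) ≅
Hom(H₂(X;ℤ), ℤ)` is torsion-free. -/
theorem one_connected_not_reflective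
    {Ho : Type u} [Category.{v} Ho]
    (KZ2 RP2 : Ho) (OneConn : Set Ho)
    (grp : ∀ Y : Ho, AddCommGroup (Y ⟶ KZ2))
    (hnat : ∀ {Y Z : Ho} (f : Y ⟶ Z) (a b : Z ⟶ KZ2),
      f ≫ (a + b) = f ≫ a + f ≫ b)
    (hRP2 : Nonempty ((RP2 ⟶ KZ2) ≃+ ZMod 2))
    (htf : ∀ X ∈ OneConn, ∀ (n : ℤ) (a : X ⟶ KZ2), n ≠ 0 → n • a = 0 → a = 0) :
    ¬ ∃ X ∈ OneConn, ∃ ℓ : RP2 ⟶ X,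
        Function.Bijective (fun g : X ⟶ KZ2 => ℓ ≫ g) := by
  rintro ⟨X, hX, ℓ, hinj, hsurj⟩
  obtain ⟨e⟩ := hRP2
  set a : RP2 ⟶ KZ2 := e.symm 1 with ha
  have hane : a ≠ 0 := by
    intro h
    have := congrArg e h
    simp [ha] at this
  have haa : a + a = 0 := by
    apply e.injective
    rw [map_add, map_zero, ha, e.apply_symm_apply]
    decide
  obtain ⟨g, hg⟩ := hsurj a
  have hzero : ℓ ≫ (0 : X ⟶ KZ2) = 0 := by
    have h := hnat ℓ (0 : X ⟶ KZ2) 0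
    rw [add_zero] at h
    exact (add_eq_left.mp h.symm)
  have h2 : ℓ ≫ (g + g) = 0 := by
    rw [hnat]; simp only at hg; rw [hg, haa]
  have hgg : g + g = 0 := hinj (by simp only; rw [h2, hzero])
  have hg0 : g = 0 := by
    apply htf X hX 2 g (by norm_num)
    rw [two_smul]; exact hgg
  apply hane
  rw [← hg]; simp only; rw [hg0, hzero]
end
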